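/- (Encoding part of Theorem 4 / Proposition 3) Fix β ∈ (0,1) and R₀ with β < R₀ ≤ 1. For each n, let lₙ = ⌈R₀·n⌉, let G₀(n) be a uniformly random n×lₙ matrix over 𝔽₂, let s(n) be a random defect pattern with parameter β independent of G₀(n), let t(n) ∈ 𝔽₂ⁿ be an arbitrary fixed vector, and let b(n) ∈ 𝔽₂^{U(s(n))} be defined by b(n)ᵢ = t(n)ᵢ + s(n)ᵢ for i ∈ U(s(n)). Then the probability that the linear system G₀(n)^{U(s(n))} d = b(n) (unknown d ∈ 𝔽₂^{lₙ}) has no solution tends to 0 as n → ∞. -/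

import Mathlib

/-- A defect pattern is `s : Fin n → Option (ZMod 2)`, where `s i = none` means cell `i`
is normal (`λ`) and `s i = some v` means cell `i` is stuck at value `v`.
`defectWt β s` is the probability of the pattern `s` when the cells are i.i.d. with
`P(sᵢ = 0) = P(sᵢ = 1) = β/2` and `P(sᵢ = λ) = 1 - β`. -/
noncomputable def defectWt (n : ℕ) (β : ℝ) (s : Fin n → Option (ZMod 2)) : ℝ :=
  ∏ i, if s i = none then 1 - β else β / 2

/-- For each blocklength `n`, the probability (over a uniformly random `n × ⌈R₀ n⌉`
matrix `G₀` and an independent random defect pattern `s` with parameter `β`) that the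
linear system `G₀^{U(s)} d = b`, with `bᵢ = tᵢ + sᵢ` on the stuck-at cells, has no
solution. -/
noncomputable def encFailProb (β R₀ : ℝ) (t : (n : ℕ) → Fin n → ZMod 2) (n : ℕ) : ℝ :=
  ∑ G : Matrix (Fin n) (Fin ⌈R₀ * n⌉₊) (ZMod 2),
    ∑ s : Fin n → Option (ZMod 2),
      ((1 : ℝ) / 2 ^ (n * ⌈R₀ * n⌉₊)) * defectWt n β s *
        (if ¬ ∃ d : Fin ⌈R₀ * n⌉₊ → ZMod 2,
            ∀ i, ∀ v : ZMod 2, s i = some v → G.mulVec d i = t n i + v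
         then 1 else 0)

/-!
If the system restricted to the stuck cells `U` has no solution, some nonzero `c` supported on
`U` satisfies `c ᵀ G = 0`. For a fixed nonzero `c` a uniform `G` has `c ᵀ G = 0` with probability
`2^(-l)`, so by the union bound over the `2^|U|` candidates the failure probability given the
defect pattern is at most `min 1 (2^(|U| - l)) ≤ a^(|U| - l)` for any `a ∈ [1, 2]`. Averaging over
the pattern gives `E[a^|U|] = (1 - β + β a)^n`, so the failure probability is at most
`((1 - β + β a) / a^R₀)^n`, and for `a = 2R₀ / (R₀ + β)` this ratio is below `1` as soon as
`β < R₀`.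
-/

open Finset Matrix

namespace Matrix

variable {K m l : Type*} [Field K] [Fintype m] [Fintype l]

theorem exists_vecMul_eq_zero_of_not_exists_mulVec_eq (G : Matrix m l K) (U : Set m)
    (b : m → K) (h : ¬ ∃ d, ∀ i ∈ U, (G *ᵥ d) i = b i) :
    ∃ c : m → K, c ≠ 0 ∧ (∀ i ∉ U, c i = 0) ∧ c ᵥ* G = 0 := by
  classical
  -- `b` lies outside `range G + {v | v = 0 on U}`, and a functional separating them is `c ⬝ᵥ ·`.
  set W := LinearMap.range G.mulVecLin ⊔ Submodule.pi U fun _ => ⊥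
  have hb : b ∉ W := by
    rw [Submodule.mem_sup]
    rintro ⟨_, ⟨d, rfl⟩, w, hw, hsum⟩
    refine h ⟨d, fun i hi => ?_⟩
    rw [← hsum, Pi.add_apply, (Submodule.mem_bot K).1 (hw i hi), add_zero]
    rfl
  obtain ⟨f, hfb, hWf⟩ := Submodule.exists_le_ker_of_notMem hb
  set c : m → K := fun i => f (Pi.single i 1)
  have hf : ∀ v, f v = c ⬝ᵥ v := fun v => by
    rw [LinearMap.pi_apply_eq_sum_univ, dotProduct]
    refine sum_congr rfl fun i _ => ?_
    rw [smul_eq_mul, mul_comm]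
    congr
    ext j
    simp [Pi.single_apply, eq_comm]
  refine ⟨c, fun hc => hfb (by rw [hf, hc, zero_dotProduct]), fun i hi => ?_, ?_⟩
  · refine hWf (Submodule.mem_sup_right fun j hj => ?_)
    rw [Pi.single_eq_of_ne (by rintro rfl; exact hi hj)]
    exact Submodule.zero_mem _
  · ext j
    have := hWf (Submodule.mem_sup_left ⟨Pi.single j 1, rfl⟩)
    rwa [LinearMap.mem_ker, hf, mulVecLin_apply, mulVec_single_one] at this

variable [Fintype K] [DecidableEq K] [DecidableEq m] [DecidableEq l]

theorem card_filter_vecMul_eq_zero_mul {c : m → K} (hc : c ≠ 0) :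
    #{G : Matrix m l K | c ᵥ* G = 0} * Fintype.card K ^ Fintype.card l
      = Fintype.card K ^ (Fintype.card m * Fintype.card l) := by
  let φ : Matrix m l K →+ (l → K) := AddMonoidHom.mk' (c ᵥ* ·) fun A B => vecMul_add A B c
  have hφ : Function.Surjective φ := fun y => by
    obtain ⟨i₀, hi₀⟩ : ∃ i, c i ≠ 0 := Function.ne_iff.1 hc
    refine ⟨Matrix.of (Pi.single i₀ ((c i₀)⁻¹ • y)), funext fun j => ?_⟩
    simp [φ, vecMul, dotProduct, Pi.single_apply, ite_apply, hi₀]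
  have := φ.ker.card_mul_index
  rw [AddSubgroup.index_ker, AddMonoidHom.range_eq_top.2 hφ, AddSubgroup.card_top] at this
  rw [← Fintype.card_subtype, ← Nat.card_eq_fintype_card]
  change Nat.card φ.ker * _ = _
  simpa [Nat.card_eq_fintype_card, Matrix, pow_mul'] using this

theorem card_filter_not_exists_mulVec_eq_mul_le (U : Finset m) (b : m → K) :
    #{G : Matrix m l K | ¬ ∃ d, ∀ i ∈ U, (G *ᵥ d) i = b i} * Fintype.card K ^ Fintype.card l
      ≤ Fintype.card K ^ #U * Fintype.card K ^ (Fintype.card m * Fintype.card l) := by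
  set q := Fintype.card K
  set C : Finset (m → K) := (Fintype.piFinset fun i => if i ∈ U then univ else {0}).filter (· ≠ 0)
  have hC : #C ≤ q ^ #U := calc
    #C ≤ #(Fintype.piFinset fun i => if i ∈ U then (univ : Finset K) else {0}) :=
      card_filter_le _ _
    _ = q ^ #U := by simp [apply_ite, prod_ite_mem, q]
  calc #{G : Matrix m l K | ¬ ∃ d, ∀ i ∈ U, (G *ᵥ d) i = b i} * q ^ Fintype.card l
      ≤ #(C.biUnion fun c => {G : Matrix m l K | c ᵥ* G = 0}) * q ^ Fintype.card l := by
        gcongr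
        intro G hG
        obtain ⟨c, hc, hcU, hcG⟩ :=
          G.exists_vecMul_eq_zero_of_not_exists_mulVec_eq U b (mem_filter.1 hG).2
        simp only [mem_biUnion, mem_filter, mem_univ, true_and, C, Fintype.mem_piFinset]
        exact ⟨c, ⟨fun i => by split_ifs with hi <;> simp [hcU, hi], hc⟩, hcG⟩
    _ ≤ (∑ c ∈ C, #{G : Matrix m l K | c ᵥ* G = 0}) * q ^ Fintype.card l := by
        gcongr
        exact card_biUnion_le
    _ = #C * q ^ (Fintype.card m * Fintype.card l) := by
        rw [sum_mul, sum_const_nat fun c hc => card_filter_vecMul_eq_zero_mul (mem_filter.1 hc).2]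
    _ ≤ q ^ #U * q ^ (Fintype.card m * Fintype.card l) := by gcongr

end Matrix

theorem min_one_zpow_le_zpow {α : Type*} [Field α] [LinearOrder α] [IsStrictOrderedRing α]
    {a b : α} (ha : 1 ≤ a) (hab : a ≤ b) (e : ℤ) :
    min 1 (b ^ e) ≤ a ^ e := by
  rcases le_total 0 e with he | he
  · exact (min_le_left _ _).trans (one_le_zpow₀ ha he)
  · have h := one_le_zpow_of_nonpos₀ (div_pos (by linarith) (by linarith))
      ((div_le_one (by linarith)).2 hab) he
    rw [div_zpow, one_le_div (zpow_pos (by linarith) _)] at h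
    exact (min_le_right _ _).trans h

section DefectPattern

variable {n : ℕ} {β : ℝ}

def stuckCells (s : Fin n → Option (ZMod 2)) : Finset (Fin n) := {i | s i ≠ none}

theorem sum_defectWt_mul_pow_card_stuckCells (a : ℝ) :
    ∑ s, defectWt n β s * a ^ #(stuckCells s) = (1 - β + β * a) ^ n := by
  have hsum : ∑ o : Option (ZMod 2), (if o = none then 1 - β else β / 2 * a) = 1 - β + β * a := by
    simp [Fintype.sum_option]; ring
  rw [← hsum, Fintype.sum_pow]
  refine sum_congr rfl fun s _ => ?_
  rw [defectWt, stuckCells, ← prod_const, prod_filter, ← prod_mul_distrib]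
  refine prod_congr rfl fun i _ => ?_
  split_ifs <;> simp_all

theorem defectWt_nonneg (hβ₀ : 0 ≤ β) (hβ₁ : β ≤ 1) (s : Fin n → Option (ZMod 2)) :
    0 ≤ defectWt n β s :=
  prod_nonneg fun i _ => by split_ifs <;> linarith

variable {l : ℕ}

theorem card_filter_not_exists_stuck_mul_le (s : Fin n → Option (ZMod 2)) (t : Fin n → ZMod 2) :
    #{G : Matrix (Fin n) (Fin l) (ZMod 2) |
        ¬ ∃ d : Fin l → ZMod 2, ∀ i, ∀ v : ZMod 2, s i = some v → G.mulVec d i = t i + v} * 2 ^ l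
      ≤ 2 ^ #(stuckCells s) * 2 ^ (n * l) := by
  have h := card_filter_not_exists_mulVec_eq_mul_le (l := Fin l) (stuckCells s)
    fun i => t i + (s i).getD 0
  simp only [ZMod.card, Fintype.card_fin] at h
  refine le_trans (Nat.mul_le_mul_right _ (card_le_card fun G => ?_)) h
  simp only [mem_filter, mem_univ, true_and, stuckCells]
  refine mt fun ⟨d, hd⟩ => ⟨d, fun i v hv => ?_⟩
  simpa [hv] using hd i (by simp [hv])

theorem card_filter_not_exists_stuck_div_le {a : ℝ} (ha₁ : 1 ≤ a) (ha₂ : a ≤ 2)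
    (s : Fin n → Option (ZMod 2)) (t : Fin n → ZMod 2) :
    (#{G : Matrix (Fin n) (Fin l) (ZMod 2) |
        ¬ ∃ d : Fin l → ZMod 2, ∀ i, ∀ v : ZMod 2, s i = some v → G.mulVec d i = t i + v} : ℝ) /
        2 ^ (n * l)
      ≤ a ^ ((#(stuckCells s) : ℤ) - l) := by
  refine le_trans (le_min ?_ ?_) (min_one_zpow_le_zpow ha₁ ha₂ _)
  · rw [div_le_one (by positivity)]
    have hcard : #(univ : Finset (Matrix (Fin n) (Fin l) (ZMod 2))) = 2 ^ (n * l) := by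
      rw [card_univ, Fintype.card_congr Matrix.of.symm]
      simp [pow_mul']
    exact_mod_cast (card_filter_le _ _).trans_eq hcard
  · rw [zpow_sub₀ two_ne_zero, zpow_natCast, zpow_natCast,
      div_le_div_iff₀ (by positivity) (by positivity)]
    exact_mod_cast card_filter_not_exists_stuck_mul_le s t

end DefectPattern

theorem encFailProb_eq (β R₀ : ℝ) (t : (n : ℕ) → Fin n → ZMod 2) (n : ℕ) :
    encFailProb β R₀ t n = ∑ s, defectWt n β s *
      ((#{G : Matrix (Fin n) (Fin ⌈R₀ * n⌉₊) (ZMod 2) | ¬ ∃ d : Fin ⌈R₀ * n⌉₊ → ZMod 2,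
          ∀ i, ∀ v : ZMod 2, s i = some v → G.mulVec d i = t n i + v} : ℝ) /
        2 ^ (n * ⌈R₀ * n⌉₊)) := by
  rw [encFailProb, sum_comm]
  refine sum_congr rfl fun s _ => ?_
  rw [← mul_sum, sum_boole]
  ring

theorem encFailProb_le {β R₀ a : ℝ} (hβ₀ : 0 ≤ β) (hβ₁ : β ≤ 1) (ha₁ : 1 ≤ a) (ha₂ : a ≤ 2)
    (t : (n : ℕ) → Fin n → ZMod 2) (n : ℕ) :
    encFailProb β R₀ t n ≤ ((1 - β + β * a) / a ^ R₀) ^ n := by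
  have ha₀ : 0 < a := by linarith
  calc encFailProb β R₀ t n
      ≤ ∑ s, defectWt n β s * a ^ ((#(stuckCells s) : ℤ) - ⌈R₀ * n⌉₊) := by
        rw [encFailProb_eq]
        gcongr with s
        · exact defectWt_nonneg hβ₀ hβ₁ s
        · exact card_filter_not_exists_stuck_div_le ha₁ ha₂ s (t n)
    _ = (1 - β + β * a) ^ n / a ^ ⌈R₀ * n⌉₊ := by
        simp only [zpow_sub₀ ha₀.ne', zpow_natCast, mul_div_assoc', ← sum_div,
          sum_defectWt_mul_pow_card_stuckCells]
    _ ≤ (1 - β + β * a) ^ n / (a ^ R₀) ^ n := by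
        have : 0 ≤ 1 - β + β * a := by nlinarith
        gcongr
        rw [← Real.rpow_natCast, ← Real.rpow_natCast, ← Real.rpow_mul ha₀.le]
        exact Real.rpow_le_rpow_of_exponent_le ha₁ (Nat.le_ceil _)
    _ = ((1 - β + β * a) / a ^ R₀) ^ n := (div_pow ..).symm

theorem exists_one_sub_add_mul_div_rpow_lt_one {β R₀ : ℝ} (hβ₀ : 0 ≤ β) (hR₀ : β < R₀) :
    ∃ a : ℝ, 1 ≤ a ∧ a ≤ 2 ∧ (1 - β + β * a) / a ^ R₀ < 1 := by
  have hR₀₀ : 0 < R₀ := by linarith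
  set a := 2 * R₀ / (R₀ + β)
  have ha₀ : 0 < a := by positivity
  have ha₁ : 1 ≤ a := by rw [le_div_iff₀ (by linarith)]; linarith
  refine ⟨a, ha₁, (div_le_iff₀ (by linarith)).2 (by linarith), (div_lt_one (by positivity)).2 ?_⟩
  calc 1 - β + β * a = 1 + R₀ * (1 - a⁻¹) - (R₀ - β) ^ 2 / (2 * (R₀ + β)) := by
        simp only [a]; field_simp; ring
    _ < 1 + R₀ * (1 - a⁻¹) := sub_lt_self _ (by have := sub_pos.2 hR₀; positivity)
    _ ≤ 1 + R₀ * Real.log a := by gcongr; exact Real.one_sub_inv_le_log_of_pos ha₀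
    _ ≤ a ^ R₀ := by
        rw [Real.rpow_def_of_pos ha₀, mul_comm, add_comm]
        exact Real.add_one_le_exp _

theorem stmt17_general (β R₀ : ℝ) (hβ₀ : 0 < β) (hβ₁ : β < 1)
    (hR₀ : β < R₀) (t : (n : ℕ) → Fin n → ZMod 2) :
    Filter.Tendsto (encFailProb β R₀ t) Filter.atTop (nhds 0) := by
  obtain ⟨a, ha₁, ha₂, hlt⟩ := exists_one_sub_add_mul_div_rpow_lt_one hβ₀.le hR₀
  refine squeeze_zero (fun n => ?_) (encFailProb_le hβ₀.le hβ₁.le ha₁ ha₂ t)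
    (tendsto_pow_atTop_nhds_zero_of_lt_one ?_ hlt)
  · rw [encFailProb_eq]
    exact sum_nonneg fun s _ => mul_nonneg (defectWt_nonneg hβ₀.le hβ₁.le s) (by positivity)
  · have : 0 ≤ 1 - β + β * a := by nlinarith
    positivity

theorem stmt17 (β R₀ : ℝ) (hβ₀ : 0 < β) (hβ₁ : β < 1)
    (hR₀ : β < R₀) (hR₁ : R₀ ≤ 1)
    (t : (n : ℕ) → Fin n → ZMod 2) :
    Filter.Tendsto (encFailProb β R₀ t) Filter.atTop (nhds 0) :=
  stmt17_general β R₀ hβ₀ hβ₁ hR₀ t
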